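/- arXiv:math/0508216 — 3 statements merged into one kernel-verified Lean document; each statement's English description precedes it below -/
import Mathlib

section
/- Let C* be a finite-dimensional graded complex over ℂ with differential d, non-degenerate graded bilinear form b, transpose differential dᵗ, and B := ddᵗ + dᵗd with ker B = 0. Let B^q denote the restriction of B to C^q. Then the torsion of the acyclic complex C* with respect to the equivalence class of graded bases determined by b satisfies τ(C*, b)² = ∏_q (det B^q)^{(−1)^{q+1} q}. -/
/-!
Write `a q` for the determinant of `dᵗd` on `im dᵗ ∩ C^q`. Nondegeneracy of `b` turns `d² = 0`
into `(dᵗ)² = 0`, so an injective `B` splits `C^q = im dᵗ ⊕ im d` into `B`-invariant pieces on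
which `B` acts as `dᵗd` and as `ddᵗ`. The differential `d` maps `im dᵗ ∩ C^{q-1}` isomorphically
onto `im d ∩ C^q` and conjugates `dᵗd` to `ddᵗ`, hence `det B^q = a q * a (q - 1)`. In
`∏ (a q * a (q - 1)) ^ ((-1)^(q+1) q)` the total exponent of `a q` is
`(-1)^(q+1) q + (-1)^(q+2) (q + 1) = (-1)^q`.
-/

open Function LinearMap

namespace LinearMap

theorem IsAdjointPair.comp_eq_zero {R U V W M : Type*} [CommSemiring R]
    [AddCommMonoid U] [Module R U] [AddCommMonoid V] [Module R V] [AddCommMonoid W] [Module R W]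
    [AddCommMonoid M] [Module R M]
    {bU : U →ₗ[R] U →ₗ[R] M} {bV : V →ₗ[R] V →ₗ[R] M} {bW : W →ₗ[R] W →ₗ[R] M}
    {d₀ : U →ₗ[R] V} {δ₀ : V →ₗ[R] U} {d₁ : V →ₗ[R] W} {δ₁ : W →ₗ[R] V}
    (hbU : bU.SeparatingRight) (h₀ : IsAdjointPair bU bV d₀ δ₀) (h₁ : IsAdjointPair bV bW d₁ δ₁)
    (hd : d₁ ∘ₗ d₀ = 0) : δ₀ ∘ₗ δ₁ = 0 := by
  ext w
  refine hbU _ fun u => ?_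
  rw [comp_apply, ← h₀ u (δ₁ w), ← h₁ (d₀ u) w, ← comp_apply d₁ d₀, hd]
  simp

theorem det_eq_det_restrict_mul_det_restrict {R E : Type*} [CommRing R] [AddCommGroup E]
    [Module R E] {p q : Submodule R E} [Module.Free R p] [Module.Free R q]
    [Module.Finite R p] [Module.Finite R q] (hpq : IsCompl p q) (f : E →ₗ[R] E)
    (hp : ∀ x ∈ p, f x ∈ p) (hq : ∀ x ∈ q, f x ∈ q) :
    LinearMap.det f = LinearMap.det (f.restrict hp) * LinearMap.det (f.restrict hq) := by
  let e := Submodule.prodEquivOfIsCompl p q hpq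
  have hconj : (e.symm : E →ₗ[R] p × q) ∘ₗ f ∘ₗ (e : p × q →ₗ[R] E) =
      (f.restrict hp).prodMap (f.restrict hq) := by
    ext x <;> simp [e, hp, hq]
  rw [← det_prodMap, ← hconj, ← det_conj f e.symm, LinearEquiv.symm_symm]

variable {K U V : Type*} [Field K] [AddCommGroup U] [Module K U] [AddCommGroup V] [Module K V]

def compOnRange (g : V →ₗ[K] U) (f : U →ₗ[K] V) : range g →ₗ[K] range g :=
  (g ∘ₗ f).restrict fun x _ => mem_range_self g (f x)

@[simp]
theorem compOnRange_apply_coe (g : V →ₗ[K] U) (f : U →ₗ[K] V) (x : range g) :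
    (compOnRange g f x : U) = g (f x) := rfl

theorem bijective_restrict_range_of_injective_compOnRange [FiniteDimensional K V]
    {f : U →ₗ[K] V} {g : V →ₗ[K] U}
    (hfg : Injective (compOnRange f g)) (hgf : Injective (compOnRange g f)) :
    Bijective (f.restrict (p := range g) (q := range f) fun x _ => mem_range_self f x) := by
  refine ⟨fun x y hxy => hgf (Subtype.ext ?_), fun y => ?_⟩
  · simpa using congrArg (g ∘ Subtype.val) hxy
  · obtain ⟨z, hz⟩ := (injective_iff_surjective.mp hfg) y
    exact ⟨⟨g z, mem_range_self g z⟩, Subtype.ext (by simpa using congrArg Subtype.val hz)⟩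

theorem det_compOnRange_comm [FiniteDimensional K V] {f : U →ₗ[K] V} {g : V →ₗ[K] U}
    (hfg : Injective (compOnRange f g)) (hgf : Injective (compOnRange g f)) :
    LinearMap.det (compOnRange f g) = LinearMap.det (compOnRange g f) := by
  let φ := LinearEquiv.ofBijective _ (bijective_restrict_range_of_injective_compOnRange hfg hgf)
  have hconj : compOnRange f g = (φ : range g →ₗ[K] range f) ∘ₗ compOnRange g f ∘ₗ
      (φ.symm : range f →ₗ[K] range g) := by
    ext y
    obtain ⟨x, rfl⟩ := φ.surjective y
    simp [φ]
  rw [hconj, det_conj]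

section Laplacian

variable {W : Type*} [AddCommGroup W] [Module K W]
  {d₀ : U →ₗ[K] V} {δ₀ : V →ₗ[K] U} {d₁ : V →ₗ[K] W} {δ₁ : W →ₗ[K] V}

theorem laplacian_apply_of_mem_range_left (hδ : δ₀ ∘ₗ δ₁ = 0) {x : V} (hx : x ∈ range δ₁) :
    (δ₁ ∘ₗ d₁ + d₀ ∘ₗ δ₀) x = δ₁ (d₁ x) := by
  obtain ⟨w, rfl⟩ := hx
  simp [← comp_apply δ₀ δ₁, hδ]

theorem laplacian_apply_of_mem_range_right (hd : d₁ ∘ₗ d₀ = 0) {x : V} (hx : x ∈ range d₀) :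
    (δ₁ ∘ₗ d₁ + d₀ ∘ₗ δ₀) x = d₀ (δ₀ x) := by
  obtain ⟨u, rfl⟩ := hx
  simp [← comp_apply d₁ d₀, hd]

theorem isCompl_range_of_injective_laplacian [FiniteDimensional K V] (hd : d₁ ∘ₗ d₀ = 0)
    (hδ : δ₀ ∘ₗ δ₁ = 0) (hΔ : Injective (δ₁ ∘ₗ d₁ + d₀ ∘ₗ δ₀)) :
    IsCompl (range δ₁) (range d₀) := by
  refine ⟨Submodule.disjoint_def.mpr fun x hx₁ hx₀ => hΔ ?_, ?_⟩
  · rw [map_zero, laplacian_apply_of_mem_range_left hδ hx₁]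
    obtain ⟨u, rfl⟩ := hx₀
    simp [← comp_apply d₁ d₀, hd]
  · refine codisjoint_iff.mpr (eq_top_iff.mpr fun x _ => ?_)
    obtain ⟨y, rfl⟩ := (injective_iff_surjective.mp hΔ) x
    exact Submodule.add_mem_sup (mem_range_self δ₁ (d₁ y)) (mem_range_self d₀ (δ₀ y))

theorem injective_compOnRange_left_of_injective_laplacian (hδ : δ₀ ∘ₗ δ₁ = 0)
    (hΔ : Injective (δ₁ ∘ₗ d₁ + d₀ ∘ₗ δ₀)) :
    Injective (compOnRange δ₁ d₁) := by
  refine (injective_iff_map_eq_zero _).mpr fun x hx => Subtype.ext (hΔ ?_)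
  rw [Submodule.coe_zero, map_zero, laplacian_apply_of_mem_range_left hδ x.2]
  simpa using congrArg Subtype.val hx

theorem injective_compOnRange_right_of_injective_laplacian (hd : d₁ ∘ₗ d₀ = 0)
    (hΔ : Injective (δ₁ ∘ₗ d₁ + d₀ ∘ₗ δ₀)) :
    Injective (compOnRange d₀ δ₀) := by
  refine (injective_iff_map_eq_zero _).mpr fun x hx => Subtype.ext (hΔ ?_)
  rw [Submodule.coe_zero, map_zero, laplacian_apply_of_mem_range_right hd x.2]
  simpa using congrArg Subtype.val hx

theorem det_laplacian [FiniteDimensional K V] (hd : d₁ ∘ₗ d₀ = 0) (hδ : δ₀ ∘ₗ δ₁ = 0)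
    (hΔ : Injective (δ₁ ∘ₗ d₁ + d₀ ∘ₗ δ₀)) :
    LinearMap.det (δ₁ ∘ₗ d₁ + d₀ ∘ₗ δ₀) =
      LinearMap.det (compOnRange δ₁ d₁) * LinearMap.det (compOnRange d₀ δ₀) := by
  have hleft : ∀ x ∈ range δ₁, (δ₁ ∘ₗ d₁ + d₀ ∘ₗ δ₀) x ∈ range δ₁ := fun x hx => by
    rw [laplacian_apply_of_mem_range_left hδ hx]
    exact mem_range_self δ₁ (d₁ x)
  have hright : ∀ x ∈ range d₀, (δ₁ ∘ₗ d₁ + d₀ ∘ₗ δ₀) x ∈ range d₀ := fun x hx => by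
    rw [laplacian_apply_of_mem_range_right hd hx]
    exact mem_range_self d₀ (δ₀ x)
  rw [det_eq_det_restrict_mul_det_restrict (isCompl_range_of_injective_laplacian hd hδ hΔ) _
    hleft hright]
  congr 2 <;> ext x
  · exact laplacian_apply_of_mem_range_left hδ x.2
  · exact laplacian_apply_of_mem_range_right hd x.2

end Laplacian

end LinearMap

theorem neg_one_zpow_add_one_mul_add (n : ℤ) :
    (((-1 : ℤˣ) ^ (n + 1) : ℤˣ) : ℤ) * n + (((-1 : ℤˣ) ^ (n + 1 + 1) : ℤˣ) : ℤ) * (n + 1) =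
      (((-1 : ℤˣ) ^ n : ℤˣ) : ℤ) := by
  have hsucc : ∀ k : ℤ, (((-1 : ℤˣ) ^ (k + 1) : ℤˣ) : ℤ) = -(((-1 : ℤˣ) ^ k : ℤˣ) : ℤ) := by
    simp [zpow_add_one]
  rw [hsucc (n + 1), hsucc n]
  ring

theorem Function.HasFiniteMulSupport.comp_add_zpow {G : Type*} [DivisionMonoid G] {a : ℤ → G}
    (ha : HasFiniteMulSupport a) (s : ℤ) (k : ℤ → ℤ) :
    HasFiniteMulSupport fun n => a (n + s) ^ k n :=
  (ha.comp_of_injective (add_left_injective s)).subset fun n hn h => hn (by simp_all)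

theorem finprod_mul_sub_one_zpow {G : Type*} [CommGroupWithZero G] {a : ℤ → G}
    (ha : ∀ n, a n ≠ 0) (hfin : HasFiniteMulSupport a) :
    ∏ᶠ n : ℤ, (a n * a (n - 1)) ^ ((((-1 : ℤˣ) ^ (n + 1) : ℤˣ) : ℤ) * n) =
      ∏ᶠ n : ℤ, a n ^ (((-1 : ℤˣ) ^ n : ℤˣ) : ℤ) := by
  set E : ℤ → ℤ := fun n => (((-1 : ℤˣ) ^ (n + 1) : ℤˣ) : ℤ) * n
  have hfin₀ := hfin.comp_add_zpow 0 E
  simp only [add_zero] at hfin₀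
  calc ∏ᶠ n, (a n * a (n - 1)) ^ E n
      = (∏ᶠ n, a n ^ E n) * ∏ᶠ n, a (n - 1) ^ E n := by
        simp_rw [mul_zpow]
        exact finprod_mul_distrib hfin₀
          (by simpa [← sub_eq_add_neg] using hfin.comp_add_zpow (-1) E)
    _ = (∏ᶠ n, a n ^ E n) * ∏ᶠ n, a n ^ E (n + 1) := by
        congr 1
        rw [← finprod_comp_equiv (Equiv.addRight 1)]
        simp
    _ = ∏ᶠ n, a n ^ (E n + E (n + 1)) := by
        rw [← finprod_mul_distrib hfin₀ (by simpa using hfin.comp_add_zpow 0 (E ∘ (· + 1)))]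
        simp_rw [zpow_add₀ (ha _)]
    _ = ∏ᶠ n, a n ^ (((-1 : ℤˣ) ^ n : ℤˣ) : ℤ) := by
        simp only [E, neg_one_zpow_add_one_mul_add]

/-- Torsion of an acyclic finite dimensional graded complex with non-degenerate bilinear
form `b`: `τ(C*,b)² = ∏_q (det B^q)^{(-1)^{q+1} q}` where
`τ(C*,b)² = ∏_q (det (dᵗd|_{im dᵗ ∩ C^q}))^{(-1)^q}`. -/
theorem stmt_5 (Cx : ℤ → Type) [∀ n, AddCommGroup (Cx n)] [∀ n, Module ℂ (Cx n)]
    [∀ n, FiniteDimensional ℂ (Cx n)]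
    (hfin : {n : ℤ | ¬ Subsingleton (Cx n)}.Finite)
    (d : ∀ n, Cx n →ₗ[ℂ] Cx (n + 1)) (dt : ∀ n, Cx (n + 1) →ₗ[ℂ] Cx n)
    (b : ∀ n, Cx n →ₗ[ℂ] Cx n →ₗ[ℂ] ℂ)
    (hb : ∀ n, LinearMap.BilinForm.Nondegenerate (b n))
    (hdd : ∀ n, (d (n + 1)).comp (d n) = 0)
    (htrans : ∀ n (v : Cx n) (w : Cx (n + 1)), b (n + 1) (d n v) w = b n v (dt n w))
    (B : ∀ n, Cx n →ₗ[ℂ] Cx n)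
    (hB : ∀ n, B (n + 1) = (dt (n + 1)).comp (d (n + 1)) + (d n).comp (dt n))
    (hker : ∀ n, LinearMap.ker (B n) = ⊥) :
    (∏ᶠ n : ℤ, LinearMap.det
        (((dt n).comp (d n)).restrict
          (p := LinearMap.range (dt n)) (q := LinearMap.range (dt n))
          (fun x _ => LinearMap.mem_range_self (dt n) (d n x)))
        ^ ((((-1 : ℤˣ) ^ n : ℤˣ) : ℤ))) =
      ∏ᶠ n : ℤ, LinearMap.det (B n) ^ (((((-1 : ℤˣ) ^ (n + 1) : ℤˣ) : ℤ)) * n) := by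
  have shift : ∀ {P : ℤ → Prop}, (∀ n, P (n + 1)) → ∀ k, P k :=
    fun h k => sub_add_cancel k 1 ▸ h (k - 1)
  have hδ : ∀ n, (dt n).comp (dt (n + 1)) = 0 := fun n =>
    IsAdjointPair.comp_eq_zero (hb n).2 (htrans n) (htrans (n + 1)) (hdd n)
  have hΔ : ∀ n, Injective ((dt (n + 1)).comp (d (n + 1)) + (d n).comp (dt n)) := fun n =>
    hB n ▸ ker_eq_bot.mp (hker (n + 1))
  have hcodiff : ∀ k, Injective (compOnRange (dt k) (d k)) := shift fun n =>
    injective_compOnRange_left_of_injective_laplacian (hδ n) (hΔ n)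
  have hdetB : ∀ n, LinearMap.det (B (n + 1)) =
      LinearMap.det (compOnRange (dt (n + 1)) (d (n + 1))) *
        LinearMap.det (compOnRange (dt n) (d n)) := fun n => by
    rw [hB, det_laplacian (hdd n) (hδ n) (hΔ n), det_compOnRange_comm
      (injective_compOnRange_right_of_injective_laplacian (hdd n) (hΔ n)) (hcodiff n)]
  have hdetB_ne : ∀ n, LinearMap.det (B n) ≠ 0 := fun n =>
    det_eq_zero_iff_ker_ne_bot.not.mpr (not_not.mpr (hker n))
  have hne : ∀ k, LinearMap.det (compOnRange (dt k) (d k)) ≠ 0 := shift fun n =>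
    left_ne_zero_of_mul (hdetB n ▸ hdetB_ne (n + 1))
  have hsupp : HasFiniteMulSupport fun k => LinearMap.det (compOnRange (dt k) (d k)) :=
    hfin.subset fun k hk _ => hk (det_eq_one_of_subsingleton _)
  have hdetB' : ∀ k, LinearMap.det (B k) =
      LinearMap.det (compOnRange (dt k) (d k)) *
        LinearMap.det (compOnRange (dt (k - 1)) (d (k - 1))) := shift fun n => by
    rw [add_sub_cancel_right]
    exact hdetB n
  simp_rw [hdetB']
  exact (finprod_mul_sub_one_zpow hne hsupp).symm
end

section
/- Let Γ be a group, ω : Γ → ℝ a group homomorphism, and A a finite-dimensional normed algebra. Let N denote the set of maps a : Γ → A such that {γ ∈ Γ : −ω(γ) ≤ K, a(γ) ≠ 0} is finite for every K ∈ ℝ, and let L¹ be the Banach algebra of absolutely summable maps Γ → A under convolution. Suppose I, a ∈ N with ‖1 − a‖_{L¹} < 1, I*a ∈ L¹, and a(γ) ≠ 0 implies −ω(γ) ≥ 0. Then I ∈ L¹. -/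
/-- Convolution product on functions `Γ → A`. -/
noncomputable def convMul {Γ : Type*} [Group Γ] {A : Type*} [NormedRing A]
    (a b : Γ → A) : Γ → A :=
  fun ρ => ∑' σ : Γ, a σ * b (σ⁻¹ * ρ)

/-- The convolution unit: the delta function at the identity with value `1`. -/
noncomputable def convOne {Γ : Type*} [Group Γ] [DecidableEq Γ] {A : Type*}
    [NormedRing A] : Γ → A :=
  fun γ => if γ = 1 then 1 else 0

/-- If `I, a` lie in the Novikov algebra `N`, `‖1 - a‖_{L¹} < 1`, `I * a ∈ L¹`, and `a`
is supported on `{γ : -ω(γ) ≥ 0}`, then `I ∈ L¹`. -/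
theorem stmt_7 {Γ : Type*} [Group Γ] [DecidableEq Γ] {A : Type*} [NormedRing A]
    [NormedAlgebra ℂ A] [FiniteDimensional ℂ A]
    (ω : Γ → ℝ) (hω : ∀ σ τ : Γ, ω (σ * τ) = ω σ + ω τ)
    (I a : Γ → A)
    (hIN : ∀ K : ℝ, {γ : Γ | -ω γ ≤ K ∧ I γ ≠ 0}.Finite)
    (haN : ∀ K : ℝ, {γ : Γ | -ω γ ≤ K ∧ a γ ≠ 0}.Finite)
    (hsum : Summable fun γ => ‖convOne γ - a γ‖)
    (hlt : (∑' γ : Γ, ‖convOne γ - a γ‖) < 1)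
    (hIa : Summable fun γ => ‖convMul I a γ‖)
    (hsupp : ∀ γ : Γ, a γ ≠ 0 → 0 ≤ -ω γ) :
    Summable fun γ => ‖I γ‖ := by
  classical
  set b : Γ → A := fun γ => convOne γ - a γ with hbdef
  have hω1 : ω 1 = 0 := by have := hω 1 1; simp at this; linarith
  have hωinv : ∀ σ : Γ, ω σ⁻¹ = -ω σ := by
    intro σ
    have := hω σ⁻¹ σ
    simp [hω1] at this
    linarith
  have hbsupp : ∀ γ : Γ, b γ ≠ 0 → 0 ≤ -ω γ := by
    intro γ h
    by_cases hγ : γ = 1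
    · simp [hγ, hω1]
    · refine hsupp γ ?_
      intro ha0
      exact h (by simp [hbdef, convOne, hγ, ha0])
  set θ := ∑' γ : Γ, ‖b γ‖ with hθdef
  have hθ0 : 0 ≤ θ := tsum_nonneg fun _ => norm_nonneg _
  have hθ1 : 0 < 1 - θ := by linarith
  set C := ∑' γ : Γ, ‖convMul I a γ‖ with hCdef
  have hC0 : 0 ≤ C := tsum_nonneg fun _ => norm_nonneg _
  -- key support fact: -ω(σ⁻¹γ) ≥ 0 ↔ -ω σ ≤ -ω γ
  have hωmul : ∀ σ γ : Γ, -ω (σ⁻¹ * γ) = (-ω γ) - (-ω σ) := by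
    intro σ γ
    rw [hω, hωinv]
    ring
  refine summable_of_sum_le (c := C / (1 - θ)) (fun γ => norm_nonneg _) ?_
  intro T
  rcases T.eq_empty_or_nonempty with rfl | hT
  · simp [div_nonneg hC0 hθ1.le]
  set K := T.sup' hT (fun γ => -ω γ) with hKdef
  set S := (hIN K).toFinset with hSdef
  have hSmem : ∀ γ : Γ, γ ∈ S ↔ (-ω γ ≤ K ∧ I γ ≠ 0) := by
    intro γ; simp [hSdef]
  set f := ∑ γ ∈ S, ‖I γ‖ with hfdef
  have hf0 : 0 ≤ f := Finset.sum_nonneg fun _ _ => norm_nonneg _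
  -- step 1: ∑_T ‖I γ‖ ≤ f
  have step1 : ∑ γ ∈ T, ‖I γ‖ ≤ f := by
    rw [← Finset.sum_filter_of_ne (p := fun γ => I γ ≠ 0)
      (fun γ _ h => by simpa using norm_ne_zero_iff.mp h)]
    refine Finset.sum_le_sum_of_subset_of_nonneg ?_ (fun _ _ _ => norm_nonneg _)
    intro γ hγ
    simp only [Finset.mem_filter] at hγ
    rw [hSmem]
    exact ⟨Finset.le_sup' (fun γ => -ω γ) hγ.1, hγ.2⟩
  -- step 2: pointwise identity on S
  have step2 : ∀ γ ∈ S, ‖I γ‖ ≤ (∑ σ ∈ S, ‖I σ‖ * ‖b (σ⁻¹ * γ)‖) + ‖convMul I a γ‖ := by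
    intro γ hγ
    rw [hSmem] at hγ
    have hconv : convMul I a γ = ∑ σ ∈ S, I σ * a (σ⁻¹ * γ) := by
      refine tsum_eq_sum ?_
      intro σ hσ
      rw [hSmem] at hσ
      push_neg at hσ
      by_cases hI : I σ = 0
      · simp [hI]
      · have hK : K < -ω σ := lt_of_not_ge fun h => hI (hσ h)
        have : a (σ⁻¹ * γ) = 0 := by
          by_contra ha0
          have := hsupp _ ha0
          rw [hωmul] at this
          have : -ω σ ≤ -ω γ := by linarith
          linarith [hγ.1]
        simp [this]
    have hone : (∑ σ ∈ S, I σ * convOne (σ⁻¹ * γ)) = I γ := by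
      rw [Finset.sum_eq_single γ]
      · simp [convOne]
      · intro σ _ hσγ
        have hne : σ⁻¹ * γ ≠ 1 := fun h => hσγ (inv_mul_eq_one.mp h)
        simp [convOne, hne]
      · intro h
        exact absurd ((hSmem γ).mpr hγ) h
    have hId : I γ = (∑ σ ∈ S, I σ * b (σ⁻¹ * γ)) + convMul I a γ := by
      rw [hconv, ← Finset.sum_add_distrib, ← hone]
      refine Finset.sum_congr rfl fun σ _ => ?_
      rw [← mul_add]
      congr 1
      simp [hbdef]
    calc ‖I γ‖ ≤ ‖∑ σ ∈ S, I σ * b (σ⁻¹ * γ)‖ + ‖convMul I a γ‖ := by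
          rw [hId]; exact norm_add_le _ _
      _ ≤ (∑ σ ∈ S, ‖I σ‖ * ‖b (σ⁻¹ * γ)‖) + ‖convMul I a γ‖ := by
          gcongr
          exact (norm_sum_le _ _).trans (Finset.sum_le_sum fun σ _ => norm_mul_le _ _)
  -- step 3: f ≤ C + θ * f
  have hbrow : ∀ σ : Γ, (∑ γ ∈ S, ‖b (σ⁻¹ * γ)‖) ≤ θ := by
    intro σ
    have : (∑ γ ∈ S, ‖b (σ⁻¹ * γ)‖)
        = ∑ γ ∈ S.map (Equiv.mulLeft σ⁻¹).toEmbedding, ‖b γ‖ := by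
      rw [Finset.sum_map]
      rfl
    rw [this]
    exact Summable.sum_le_tsum _ (fun _ _ => norm_nonneg _) hsum
  have step3 : f ≤ C + θ * f := by
    calc f ≤ ∑ γ ∈ S, ((∑ σ ∈ S, ‖I σ‖ * ‖b (σ⁻¹ * γ)‖) + ‖convMul I a γ‖) :=
          Finset.sum_le_sum step2
      _ = (∑ γ ∈ S, ∑ σ ∈ S, ‖I σ‖ * ‖b (σ⁻¹ * γ)‖) + ∑ γ ∈ S, ‖convMul I a γ‖ :=
          Finset.sum_add_distrib
      _ ≤ (∑ σ ∈ S, ∑ γ ∈ S, ‖I σ‖ * ‖b (σ⁻¹ * γ)‖) + C := by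
          rw [Finset.sum_comm]
          gcongr
          exact Summable.sum_le_tsum _ (fun _ _ => norm_nonneg _) hIa
      _ ≤ (∑ σ ∈ S, ‖I σ‖ * θ) + C := by
          gcongr with σ hσ
          rw [← Finset.mul_sum]
          exact mul_le_mul_of_nonneg_left (hbrow σ) (norm_nonneg _)
      _ = C + θ * f := by rw [← Finset.sum_mul]; ring
  -- conclude
  refine step1.trans ?_
  rw [le_div_iff₀ hθ1]
  nlinarith
end

section
/- Let Γ be a finitely generated free abelian group and ω : Γ → ℝ an injective group homomorphism. Let Λ_ω be the Novikov field of functions λ : Γ → ℂ such that {γ : λ(γ) ≠ 0, −ω(γ) ≤ K} is finite for all K, with convolution product. For a homomorphism η : Γ → ℂ let L¹_η be the Banach algebra of λ : Γ → ℂ with Σ_γ |λ(γ) e^{η(γ)}| < ∞. Suppose 0 ≠ λ ∈ Λ_ω ∩ L¹_η. Then there exists t₀ ∈ ℝ such that the inverse λ^{−1} (taken in the field Λ_ω) lies in Λ_ω ∩ L¹_{η+tω} for all t ≥ t₀. -/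
/-- Convolution product on functions `Γ → ℂ` for an additive group `Γ`. -/
noncomputable def aconv {Γ : Type*} [AddCommGroup Γ] (a b : Γ → ℂ) : Γ → ℂ :=
  fun ρ => ∑' σ : Γ, a σ * b (ρ - σ)

/-- The convolution unit: the delta function at `0`. -/
noncomputable def aone {Γ : Type*} [AddCommGroup Γ] [DecidableEq Γ] : Γ → ℂ :=
  fun γ => if γ = 0 then 1 else 0

/-- The Novikov condition: `{γ : l γ ≠ 0, -ω(γ) ≤ K}` is finite for all `K`. -/
def Novikov {Γ : Type*} (ω : Γ → ℝ) (l : Γ → ℂ) : Prop :=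
  ∀ K : ℝ, {γ : Γ | l γ ≠ 0 ∧ -ω γ ≤ K}.Finite

/-!
Write `l = l(γ₀) t^γ₀ (1 - u)`, where `t^γ₀` is the monomial of `l` with maximal `ω`. Since `ω`
is injective, `u` lives where `ω < 0`, and being Novikov even where `ω ≤ -δ` for some `δ > 0`.
Hence `‖u‖_{η + tω} ≤ e^{-tδ} ‖u‖_η` tends to `0`; once it is `< 1`, the Neumann series `∑ uⁿ`
converges in the Banach algebra `L¹_{η + tω}` and inverts `1 - u`, and since `uⁿ` lives where
`ω ≤ -nδ` the series is Novikov as well.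
-/

open scoped ENNReal
open Filter Topology

section Convolution

variable {Γ : Type*} [AddCommGroup Γ]

theorem aconv_comm (a b : Γ → ℂ) : aconv a b = aconv b a := by
  funext ρ
  rw [aconv, aconv, ← (Equiv.subLeft ρ).tsum_eq]
  simp [mul_comm]

theorem aconv_smul_left (c : ℂ) (a b : Γ → ℂ) : aconv (c • a) b = c • aconv a b := by
  funext ρ
  simp [aconv, mul_assoc, tsum_mul_left]

theorem aconv_smul_right (c : ℂ) (a b : Γ → ℂ) : aconv a (c • b) = c • aconv a b := by
  rw [aconv_comm, aconv_smul_left, aconv_comm]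

theorem aconv_comp_add_right (a b : Γ → ℂ) (γ₀ : Γ) :
    aconv a (fun ρ => b (ρ + γ₀)) = aconv (fun ρ => a (ρ + γ₀)) b := by
  funext ρ
  rw [aconv, aconv, ← (Equiv.addRight γ₀).tsum_eq]
  simp [sub_add_eq_sub_sub, sub_add_cancel]

theorem exists_ne_zero_of_aconv_ne_zero {a b : Γ → ℂ} {ρ : Γ} (h : aconv a b ρ ≠ 0) :
    ∃ σ, a σ ≠ 0 ∧ b (ρ - σ) ≠ 0 := by
  by_contra! hab
  refine h ((tsum_congr fun σ => ?_).trans tsum_zero)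
  by_cases hσ : a σ = 0
  · simp [hσ]
  · simp [hab σ hσ]

theorem aconv_sub_left {a b c : Γ → ℂ} {ρ : Γ} (ha : Summable fun σ => a σ * c (ρ - σ))
    (hb : Summable fun σ => b σ * c (ρ - σ)) :
    aconv (a - b) c ρ = aconv a c ρ - aconv b c ρ := by
  simp only [aconv, Pi.sub_apply, sub_mul]
  exact ha.tsum_sub hb

theorem aconv_tsum_right {a : Γ → ℂ} {f : ℕ → Γ → ℂ} {ρ : Γ}
    (h : Summable (Function.uncurry fun σ n => a σ * f n (ρ - σ))) :
    aconv a (fun γ => ∑' n, f n γ) ρ = ∑' n, aconv a (f n) ρ := by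
  simp only [aconv, ← tsum_mul_left]
  exact h.tsum_comm.symm

theorem aconv_support_le (ω : Γ →+ ℝ) {a b : Γ → ℂ} {x y : ℝ}
    (ha : ∀ γ, a γ ≠ 0 → ω γ ≤ x) (hb : ∀ γ, b γ ≠ 0 → ω γ ≤ y) :
    ∀ γ, aconv a b γ ≠ 0 → ω γ ≤ x + y := by
  intro γ h
  obtain ⟨σ, hσ, hτ⟩ := exists_ne_zero_of_aconv_ne_zero h
  have := ha σ hσ
  have := hb _ hτ
  rw [map_sub] at this
  linarith

variable [DecidableEq Γ]

theorem aconv_aone_left (b : Γ → ℂ) : aconv aone b = b := by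
  funext ρ
  rw [aconv, tsum_eq_single 0 fun σ hσ => by simp [aone, hσ]]
  simp [aone]

theorem summable_aone_mul (c : Γ → ℂ) (ρ : Γ) : Summable fun σ => aone σ * c (ρ - σ) :=
  summable_of_ne_finset_zero (s := {0}) fun σ hσ => by simp_all [aone]

end Convolution

namespace Novikov

variable {Γ : Type*} {ω : Γ → ℝ} {f g : Γ → ℂ}

theorem mono (hf : Novikov ω f) (h : ∀ γ, g γ ≠ 0 → f γ ≠ 0) : Novikov ω g :=
  fun K => (hf K).subset fun γ hγ => ⟨h γ hγ.1, hγ.2⟩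

theorem sub (hf : Novikov ω f) (hg : Novikov ω g) : Novikov ω (f - g) := by
  refine fun K => ((hf K).union (hg K)).subset fun γ ⟨hγ, hK⟩ => ?_
  by_cases hfγ : f γ = 0
  · exact Or.inr ⟨fun hgγ => hγ (by simp [hfγ, hgγ]), hK⟩
  · exact Or.inl ⟨hfγ, hK⟩

theorem bddAbove (hf : Novikov ω f) : BddAbove (ω '' Function.support f) := by
  obtain ⟨M, hM⟩ := ((hf 0).image ω).bddAbove
  refine ⟨max M 0, ?_⟩
  rintro _ ⟨γ, hγ, rfl⟩
  by_cases h : -ω γ ≤ 0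
  · exact (hM ⟨γ, ⟨hγ, h⟩, rfl⟩).trans (le_max_left _ _)
  · linarith [le_max_right M 0]

theorem exists_max (hf : Novikov ω f) (h0 : f ≠ 0) :
    ∃ γ₀, f γ₀ ≠ 0 ∧ ∀ γ, f γ ≠ 0 → ω γ ≤ ω γ₀ := by
  obtain ⟨γ₁, hγ₁⟩ := Function.ne_iff.1 h0
  obtain ⟨γ₀, ⟨hγ₀, -⟩, hmax⟩ :=
    Set.exists_max_image _ ω (hf (-ω γ₁)) ⟨γ₁, hγ₁, le_rfl⟩
  refine ⟨γ₀, hγ₀, fun γ hγ => ?_⟩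
  by_cases h : -ω γ ≤ -ω γ₁
  · exact hmax γ ⟨hγ, h⟩
  · linarith [hmax γ₁ ⟨hγ₁, le_rfl⟩]

theorem exists_gap (hf : Novikov ω f) (hneg : ∀ γ, f γ ≠ 0 → ω γ < 0) :
    ∃ δ > 0, ∀ γ, f γ ≠ 0 → ω γ ≤ -δ := by
  rcases Set.eq_empty_or_nonempty {γ | f γ ≠ 0 ∧ -ω γ ≤ 1} with hempty | hne
  · refine ⟨1, one_pos, fun γ hγ => ?_⟩
    by_contra h
    exact hempty.subset ⟨hγ, by linarith⟩
  obtain ⟨γ₁, ⟨hγ₁, -⟩, hmin⟩ := Set.exists_min_image _ (fun γ => -ω γ) (hf 1) hne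
  refine ⟨min 1 (-ω γ₁), lt_min one_pos (by linarith [hneg γ₁ hγ₁]), fun γ hγ => ?_⟩
  by_cases h : -ω γ ≤ 1
  · linarith [hmin γ ⟨hγ, h⟩, min_le_right 1 (-ω γ₁)]
  · linarith [min_le_left 1 (-ω γ₁)]

variable [AddCommGroup Γ]

theorem aone [DecidableEq Γ] : Novikov ω aone :=
  fun _ => (Set.finite_singleton 0).subset fun γ hγ => by by_contra h; simp_all [_root_.aone]

theorem comp_add_right {ω : Γ →+ ℝ} (hf : Novikov ω f) (γ₀ : Γ) :
    Novikov ω (fun ρ => f (ρ + γ₀)) := fun K =>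
  ((hf (K - ω γ₀)).preimage (add_left_injective γ₀).injOn).subset fun ρ ⟨hρ, hK⟩ =>
    ⟨hρ, by simp only [map_add]; linarith⟩

theorem aconv {ω : Γ →+ ℝ} (hf : Novikov ω f) (hg : Novikov ω g) :
    Novikov ω (_root_.aconv f g) := by
  obtain ⟨x, hx⟩ := hf.bddAbove
  obtain ⟨y, hy⟩ := hg.bddAbove
  refine fun K => ((hf (K + y)).add (hg (K + x))).subset fun γ ⟨hγ, hK⟩ => ?_
  obtain ⟨σ, hσ, hτ⟩ := exists_ne_zero_of_aconv_ne_zero hγ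
  have hσx : ω σ ≤ x := hx ⟨σ, hσ, rfl⟩
  have hτy : ω γ - ω σ ≤ y := map_sub ω γ σ ▸ hy ⟨_, hτ, rfl⟩
  exact ⟨σ, ⟨hσ, by linarith⟩, γ - σ, ⟨hτ, by rw [map_sub]; linarith⟩, add_sub_cancel _ _⟩

end Novikov

section WeightedNorm

variable {Γ : Type*} [AddCommGroup Γ] (φ : Γ →+ ℝ)

noncomputable def expWeight (γ : Γ) : ℝ≥0∞ := ENNReal.ofReal (Real.exp (φ γ))

/-- The norm of `L¹_φ` (weight `e^φ`); it is `∞` exactly off `L¹_φ`. -/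
noncomputable def weightedNorm (f : Γ → ℂ) : ℝ≥0∞ := ∑' γ, ‖f γ‖ₑ * expWeight φ γ

variable {φ}

theorem expWeight_add (a b : Γ) : expWeight φ (a + b) = expWeight φ a * expWeight φ b := by
  rw [expWeight, map_add, Real.exp_add, ENNReal.ofReal_mul (Real.exp_nonneg _)]; rfl

theorem expWeight_ne_zero (γ : Γ) : expWeight φ γ ≠ 0 :=
  (ENNReal.ofReal_pos.2 (Real.exp_pos _)).ne'

theorem ne_top_of_mul_expWeight_le {x C : ℝ≥0∞} {γ : Γ} (h : x * expWeight φ γ ≤ C)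
    (hC : C ≠ ⊤) : x ≠ ⊤ := by
  rintro rfl
  exact hC (top_unique (ENNReal.top_mul (expWeight_ne_zero γ) ▸ h))

theorem summable_norm_mul_exp_iff {f z : Γ → ℂ} (hz : ∀ γ, (z γ).re = φ γ) :
    (Summable fun γ => ‖f γ * Complex.exp (z γ)‖) ↔ weightedNorm φ f ≠ ⊤ := by
  have hexp : ∀ γ, ‖Complex.exp (z γ)‖ₑ = expWeight φ γ := fun γ => by
    rw [← ofReal_norm, Complex.norm_exp, hz, expWeight]
  simp only [← tsum_enorm_ne_top_iff_summable_norm, enorm_mul, hexp, weightedNorm]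

theorem enorm_mul_expWeight_le_weightedNorm (f : Γ → ℂ) (γ : Γ) :
    ‖f γ‖ₑ * expWeight φ γ ≤ weightedNorm φ f :=
  ENNReal.le_tsum γ

theorem weightedNorm_smul (c : ℂ) (f : Γ → ℂ) :
    weightedNorm φ (c • f) = ‖c‖ₑ * weightedNorm φ f := by
  simp [weightedNorm, mul_assoc, ENNReal.tsum_mul_left]

theorem weightedNorm_sub_le (f g : Γ → ℂ) :
    weightedNorm φ (f - g) ≤ weightedNorm φ f + weightedNorm φ g := by
  rw [weightedNorm, weightedNorm, weightedNorm, ← ENNReal.tsum_add]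
  gcongr with γ
  rw [← add_mul]
  gcongr
  exact enorm_sub_le

theorem weightedNorm_comp_add_right (f : Γ → ℂ) (γ₀ : Γ) :
    weightedNorm φ (fun ρ => f (ρ + γ₀)) = expWeight φ (-γ₀) * weightedNorm φ f := by
  rw [weightedNorm, weightedNorm, ← ENNReal.tsum_mul_left,
    ← (Equiv.addRight γ₀).tsum_eq fun γ => expWeight φ (-γ₀) * (‖f γ‖ₑ * expWeight φ γ)]
  refine tsum_congr fun ρ => ?_
  rw [Equiv.coe_addRight, ← add_neg_cancel_right ρ γ₀, expWeight_add, add_neg_cancel_right]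
  ring

theorem weightedNorm_smul_comp_add_right_ne_top {f : Γ → ℂ} (hf : weightedNorm φ f ≠ ⊤)
    (c : ℂ) (γ₀ : Γ) : weightedNorm φ (c • fun ρ => f (ρ + γ₀)) ≠ ⊤ := by
  rw [weightedNorm_smul, weightedNorm_comp_add_right]
  exact ENNReal.mul_ne_top enorm_ne_top (ENNReal.mul_ne_top ENNReal.ofReal_ne_top hf)

theorem enorm_mul_enorm_mul_expWeight (a b : Γ → ℂ) (γ σ : Γ) :
    ‖a σ‖ₑ * ‖b (γ - σ)‖ₑ * expWeight φ γ
      = ‖a σ‖ₑ * expWeight φ σ * (‖b (γ - σ)‖ₑ * expWeight φ (γ - σ)) := by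
  rw [show expWeight φ γ = expWeight φ σ * expWeight φ (γ - σ) by
    rw [← expWeight_add, add_sub_cancel]]
  ring

theorem tsum_enorm_mul_enorm_mul_expWeight_le (a b : Γ → ℂ) (γ : Γ) :
    (∑' σ, ‖a σ‖ₑ * ‖b (γ - σ)‖ₑ) * expWeight φ γ ≤ weightedNorm φ a * weightedNorm φ b := by
  rw [← ENNReal.tsum_mul_right, weightedNorm, ← ENNReal.tsum_mul_right]
  refine ENNReal.tsum_le_tsum fun σ => ?_
  rw [enorm_mul_enorm_mul_expWeight]
  gcongr
  exact enorm_mul_expWeight_le_weightedNorm b _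

theorem weightedNorm_aconv_le (a b : Γ → ℂ) :
    weightedNorm φ (aconv a b) ≤ weightedNorm φ a * weightedNorm φ b := by
  calc weightedNorm φ (aconv a b)
      ≤ ∑' γ, ∑' σ, ‖a σ‖ₑ * expWeight φ σ * (‖b (γ - σ)‖ₑ * expWeight φ (γ - σ)) := by
        refine ENNReal.tsum_le_tsum fun γ => ?_
        simp only [← enorm_mul_enorm_mul_expWeight, ENNReal.tsum_mul_right, ← enorm_mul]
        gcongr
        exact enorm_tsum_le_tsum_enorm
    _ = ∑' σ, ‖a σ‖ₑ * expWeight φ σ * weightedNorm φ b := by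
        rw [ENNReal.tsum_comm]
        refine tsum_congr fun σ => ?_
        rw [ENNReal.tsum_mul_left, weightedNorm]
        congr 1
        exact (Equiv.subRight σ).tsum_eq fun τ => ‖b τ‖ₑ * expWeight φ τ
    _ = weightedNorm φ a * weightedNorm φ b := ENNReal.tsum_mul_right

theorem weightedNorm_aone [DecidableEq Γ] : weightedNorm φ aone = 1 := by
  rw [weightedNorm, tsum_eq_single 0 fun γ hγ => by simp [aone, hγ]]
  simp [aone, expWeight]

theorem weightedNorm_add_smul_le (ω : Γ →+ ℝ) {u : Γ → ℂ} {δ t : ℝ} (ht : 0 ≤ t)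
    (hu : ∀ γ, u γ ≠ 0 → ω γ ≤ -δ) :
    weightedNorm (φ + t • ω) u ≤ ENNReal.ofReal (Real.exp (-(t * δ))) * weightedNorm φ u := by
  rw [weightedNorm, weightedNorm, ← ENNReal.tsum_mul_left]
  refine ENNReal.tsum_le_tsum fun γ => ?_
  rcases eq_or_ne (u γ) 0 with h0 | h0
  · simp [h0]
  have hexp : expWeight (φ + t • ω) γ
      = ENNReal.ofReal (Real.exp (t * ω γ)) * expWeight φ γ := by
    simp only [expWeight, AddMonoidHom.add_apply, AddMonoidHom.smul_apply, smul_eq_mul]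
    rw [← ENNReal.ofReal_mul (Real.exp_nonneg _), ← Real.exp_add, add_comm]
  rw [hexp, mul_left_comm]
  gcongr
  nlinarith [hu γ h0]

theorem tendsto_weightedNorm_add_smul (ω : Γ →+ ℝ) {u : Γ → ℂ} {δ : ℝ} (hδ : 0 < δ)
    (hu : ∀ γ, u γ ≠ 0 → ω γ ≤ -δ) (hfin : weightedNorm φ u ≠ ⊤) :
    Tendsto (fun t : ℝ => weightedNorm (φ + t • ω) u) atTop (𝓝 0) := by
  have hexp : Tendsto (fun t : ℝ => ENNReal.ofReal (Real.exp (-(t * δ)))) atTop (𝓝 0) := by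
    rw [← ENNReal.ofReal_zero]
    exact ENNReal.tendsto_ofReal (Real.tendsto_exp_atBot.comp
      (tendsto_neg_atTop_atBot.comp (tendsto_id.atTop_mul_const hδ)))
  have hbound := ENNReal.Tendsto.mul_const hexp (Or.inr hfin)
  rw [zero_mul] at hbound
  refine tendsto_of_tendsto_of_tendsto_of_le_of_le' tendsto_const_nhds hbound
    (Eventually.of_forall fun _ => zero_le) ?_
  filter_upwards [eventually_ge_atTop 0] with t ht
  exact weightedNorm_add_smul_le ω ht hu

end WeightedNorm

section Neumann

variable {Γ : Type*} [AddCommGroup Γ] [DecidableEq Γ]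

noncomputable def aconvPow (u : Γ → ℂ) : ℕ → Γ → ℂ
  | 0 => aone
  | n + 1 => aconv u (aconvPow u n)

noncomputable def neumann (u : Γ → ℂ) : Γ → ℂ := fun γ => ∑' n, aconvPow u n γ

variable {u : Γ → ℂ}

theorem aconvPow_support_le (ω : Γ →+ ℝ) {δ : ℝ} (hu : ∀ γ, u γ ≠ 0 → ω γ ≤ -δ) :
    ∀ n γ, aconvPow u n γ ≠ 0 → ω γ ≤ -(n * δ)
  | 0, γ, h => by
    obtain rfl : γ = 0 := by by_contra hγ; simp [aconvPow, aone, hγ] at h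
    simp
  | n + 1, γ, h => by
    have := aconv_support_le ω hu (aconvPow_support_le ω hu n) γ h
    push_cast
    linarith

theorem Novikov.aconvPow {ω : Γ →+ ℝ} (hu : Novikov ω u) : ∀ n, Novikov ω (aconvPow u n)
  | 0 => Novikov.aone
  | n + 1 => hu.aconv (Novikov.aconvPow hu n)

theorem Novikov.neumann {ω : Γ →+ ℝ} (hu : Novikov ω u) {δ : ℝ} (hδ : 0 < δ)
    (hgap : ∀ γ, u γ ≠ 0 → ω γ ≤ -δ) : Novikov ω (_root_.neumann u) := by
  intro K
  obtain ⟨N, hN⟩ := exists_nat_gt (K / δ)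
  refine ((Set.finite_lt_nat N).biUnion fun n _ => hu.aconvPow n K).subset ?_
  rintro γ ⟨hγ, hK⟩
  obtain ⟨n, hn⟩ : ∃ n, _root_.aconvPow u n γ ≠ 0 := by
    by_contra! h
    simp [_root_.neumann, h] at hγ
  have hnK : (n : ℝ) < N := by
    have := aconvPow_support_le ω hgap n γ hn
    rw [div_lt_iff₀ hδ] at hN
    nlinarith
  exact Set.mem_biUnion (Nat.cast_lt.1 hnK) ⟨hn, hK⟩

variable {φ : Γ →+ ℝ}

theorem weightedNorm_aconvPow_le (u : Γ → ℂ) :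
    ∀ n, weightedNorm φ (aconvPow u n) ≤ weightedNorm φ u ^ n
  | 0 => by rw [aconvPow, pow_zero, weightedNorm_aone]
  | n + 1 => (weightedNorm_aconv_le _ _).trans <| by
    rw [pow_succ']
    gcongr
    exact weightedNorm_aconvPow_le u n

theorem summable_aconvPow (hu : weightedNorm φ u < 1) (γ : Γ) :
    Summable fun n => aconvPow u n γ := by
  refine Summable.of_enorm (ne_top_of_mul_expWeight_le (φ := φ) (γ := γ) ?_
    (ENNReal.inv_ne_top.2 (tsub_pos_iff_lt.2 hu).ne'))
  rw [← ENNReal.tsum_geometric, ← ENNReal.tsum_mul_right]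
  exact ENNReal.tsum_le_tsum fun n =>
    (enorm_mul_expWeight_le_weightedNorm _ γ).trans (weightedNorm_aconvPow_le u n)

theorem summable_aconv_aconvPow (hu : weightedNorm φ u < 1) (γ : Γ) :
    Summable (Function.uncurry fun σ n => u σ * aconvPow u n (γ - σ)) := by
  refine Summable.of_enorm (ne_top_of_mul_expWeight_le (φ := φ) (γ := γ) (C := ∑' n : ℕ,
    weightedNorm φ u ^ (n + 1)) ?_ ?_)
  · rw [ENNReal.tsum_prod', ENNReal.tsum_comm, ← ENNReal.tsum_mul_right]
    refine ENNReal.tsum_le_tsum fun n => ?_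
    simp only [Function.uncurry_apply_pair, enorm_mul]
    refine (tsum_enorm_mul_enorm_mul_expWeight_le u _ γ).trans ?_
    rw [pow_succ']
    gcongr
    exact weightedNorm_aconvPow_le u n
  · rw [ENNReal.tsum_geometric_add_one]
    exact ENNReal.mul_ne_top hu.ne_top (ENNReal.inv_ne_top.2 (tsub_pos_iff_lt.2 hu).ne')

theorem weightedNorm_neumann_le (u : Γ → ℂ) :
    weightedNorm φ (neumann u) ≤ (1 - weightedNorm φ u)⁻¹ := by
  calc weightedNorm φ (neumann u)
      ≤ ∑' γ, ∑' n, ‖aconvPow u n γ‖ₑ * expWeight φ γ := by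
        refine ENNReal.tsum_le_tsum fun γ => ?_
        rw [ENNReal.tsum_mul_right]
        gcongr
        exact enorm_tsum_le_tsum_enorm
    _ ≤ ∑' n, weightedNorm φ u ^ n := by
        rw [ENNReal.tsum_comm]
        exact ENNReal.tsum_le_tsum fun n => weightedNorm_aconvPow_le u n
    _ = (1 - weightedNorm φ u)⁻¹ := ENNReal.tsum_geometric _

theorem aconv_sub_neumann (hu : weightedNorm φ u < 1) : aconv (aone - u) (neumann u) = aone := by
  funext γ
  have hF := summable_aconv_aconvPow hu γ
  have hsum : Summable fun σ => u σ * neumann u (γ - σ) := by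
    simpa only [neumann, Function.uncurry_apply_pair, tsum_mul_left] using hF.prod
  rw [aconv_sub_left (summable_aone_mul _ γ) hsum, aconv_aone_left]
  unfold neumann
  rw [aconv_tsum_right hF, (summable_aconvPow hu γ).tsum_eq_zero_add]
  simp [aconvPow]

end Neumann

theorem neg_of_aone_sub_smul_comp_add_right_ne_zero {Γ : Type*} [AddCommGroup Γ]
    [DecidableEq Γ] {ω : Γ →+ ℝ} (hω : Function.Injective ω) {l : Γ → ℂ} {γ₀ : Γ}
    (hγ₀ : l γ₀ ≠ 0) (hmax : ∀ γ, l γ ≠ 0 → ω γ ≤ ω γ₀) (ρ : Γ)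
    (hρ : ((aone : Γ → ℂ) - (l γ₀)⁻¹ • fun γ => l (γ + γ₀)) ρ ≠ 0) : ω ρ < 0 := by
  rcases eq_or_ne ρ 0 with rfl | hρ0
  · simp [aone, hγ₀] at hρ
  have hl : l (ρ + γ₀) ≠ 0 := by
    intro h
    simp [aone, hρ0, h] at hρ
  have hle := hmax _ hl
  have hne : ω ρ ≠ 0 := fun h => hρ0 (hω (h.trans (map_zero ω).symm))
  rw [map_add] at hle
  exact lt_of_le_of_ne (by linarith) hne

theorem stmt_8_general {Γ : Type*} [AddCommGroup Γ] [DecidableEq Γ]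
    (ω : Γ →+ ℝ) (hω : Function.Injective ω) (η : Γ →+ ℂ)
    (l : Γ → ℂ) (hl0 : l ≠ 0) (hlN : Novikov ω l)
    (hl1 : Summable fun γ => ‖l γ * Complex.exp (η γ)‖) :
    ∃ li : Γ → ℂ, aconv l li = aone ∧ aconv li l = aone ∧ Novikov ω li ∧
      ∃ t₀ : ℝ, ∀ t : ℝ, t₀ ≤ t →
        Summable fun γ => ‖li γ * Complex.exp (η γ + (t : ℂ) * (ω γ : ℂ))‖ := by
  obtain ⟨γ₀, hγ₀, hmax⟩ := hlN.exists_max hl0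
  set c := (l γ₀)⁻¹
  set v : Γ → ℂ := c • fun ρ => l (ρ + γ₀)
  set u : Γ → ℂ := aone - v
  have huN : Novikov ω u :=
    Novikov.aone.sub ((hlN.comp_add_right γ₀).mono fun _ => right_ne_zero_of_mul)
  obtain ⟨δ, hδ, hgap⟩ :=
    huN.exists_gap (neg_of_aone_sub_smul_comp_add_right_ne_zero hω hγ₀ hmax)
  set φ : Γ →+ ℝ := Complex.reAddGroupHom.comp η
  have hu : weightedNorm φ u ≠ ⊤ := by
    have hl : weightedNorm φ l ≠ ⊤ := (summable_norm_mul_exp_iff fun _ => rfl).1 hl1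
    refine ne_top_of_le_ne_top ?_ (weightedNorm_sub_le _ _)
    rw [weightedNorm_aone]
    exact ENNReal.add_ne_top.2
      ⟨ENNReal.one_ne_top, weightedNorm_smul_comp_add_right_ne_top hl c γ₀⟩
  obtain ⟨t₀, ht₀⟩ := eventually_atTop.1
    ((tendsto_weightedNorm_add_smul ω hδ hgap hu).eventually (gt_mem_nhds one_pos))
  set li : Γ → ℂ := c • fun ρ => neumann u (ρ + γ₀)
  have hinv : aconv l li = aone := by
    rw [aconv_smul_right, aconv_comp_add_right, ← aconv_smul_left]
    change aconv v (neumann u) = aone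
    rw [← sub_sub_cancel aone v]
    exact aconv_sub_neumann (ht₀ t₀ le_rfl)
  refine ⟨li, hinv, aconv_comm l li ▸ hinv,
    ((huN.neumann hδ hgap).comp_add_right γ₀).mono fun _ => right_ne_zero_of_mul,
    t₀, fun t ht => ?_⟩
  rw [summable_norm_mul_exp_iff (φ := φ + t • ω) fun γ => by simp [φ]]
  exact weightedNorm_smul_comp_add_right_ne_top (ne_top_of_le_ne_top
    (ENNReal.inv_ne_top.2 (tsub_pos_iff_lt.2 (ht₀ t ht)).ne') (weightedNorm_neumann_le u)) c γ₀

/-- If `0 ≠ l ∈ Λ_ω ∩ L¹_η`, then the inverse of `l` in the Novikov field `Λ_ω` lies in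
`Λ_ω ∩ L¹_{η + tω}` for all sufficiently large `t`. -/
theorem stmt_8 {Γ : Type*} [AddCommGroup Γ] [DecidableEq Γ]
    [Module.Free ℤ Γ] [Module.Finite ℤ Γ]
    (ω : Γ →+ ℝ) (hω : Function.Injective ω) (η : Γ →+ ℂ)
    (l : Γ → ℂ) (hl0 : l ≠ 0) (hlN : Novikov ω l)
    (hl1 : Summable fun γ => ‖l γ * Complex.exp (η γ)‖) :
    ∃ li : Γ → ℂ, aconv l li = aone ∧ aconv li l = aone ∧ Novikov ω li ∧
      ∃ t₀ : ℝ, ∀ t : ℝ, t₀ ≤ t →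
        Summable fun γ => ‖li γ * Complex.exp (η γ + (t : ℂ) * (ω γ : ℂ))‖ :=
  stmt_8_general ω hω η l hl0 hlN hl1
end
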